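/- Let E be a directed set, and let {X_α, p^β_α} and {Y_α, q^β_α} be inverse systems of compact Hausdorff spaces with limits X and Y. Suppose (χ_α : X_α → Y_α) is a level morphism such that each χ_α is open and surjective, and for all α ≤ β the square with maps χ_β, χ_α, p^β_α, q^β_α is bicommutative (i.e., the induced map X_β → X_α ×_{Y_α} Y_β to the fiber product is surjective). Then the limit map χ : X → Y is open and surjective. -/
import Mathlib


/-- Let `{X_α, p^β_α}` and `{Y_α, q^β_α}` be inverse systems of compact
Hausdorff spaces over a directed set `E`, with limits `X` and `Y`.  If `(χ_α)` is a level
morphism such that each `χ_α` is open and surjective and each square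
`(χ_β, χ_α, p^β_α, q^β_α)` is bicommutative (every compatible pair lifts, i.e. the
induced map to the fiber product is surjective), then the limit map `χ : X → Y` is open
and surjective. -/
theorem limit_map_open_surjective {E : Type*} [Preorder E] [IsDirected E (· ≤ ·)]
    (X Y : E → Type*)
    [∀ a, TopologicalSpace (X a)] [∀ a, CompactSpace (X a)] [∀ a, T2Space (X a)]
    [∀ a, TopologicalSpace (Y a)] [∀ a, CompactSpace (Y a)] [∀ a, T2Space (Y a)]
    (p : ∀ a b : E, a ≤ b → C(X b, X a)) (q : ∀ a b : E, a ≤ b → C(Y b, Y a))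
    (hp_id : ∀ (a : E) (h : a ≤ a) (x : X a), p a a h x = x)
    (hp_comp : ∀ (a b c : E) (hab : a ≤ b) (hbc : b ≤ c) (x : X c),
      p a b hab (p b c hbc x) = p a c (hab.trans hbc) x)
    (hq_id : ∀ (a : E) (h : a ≤ a) (y : Y a), q a a h y = y)
    (hq_comp : ∀ (a b c : E) (hab : a ≤ b) (hbc : b ≤ c) (y : Y c),
      q a b hab (q b c hbc y) = q a c (hab.trans hbc) y)
    (χ : ∀ a, C(X a, Y a))
    (hlevel : ∀ (a b : E) (h : a ≤ b) (x : X b), q a b h (χ b x) = χ a (p a b h x))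
    (hopen : ∀ a, IsOpenMap (χ a))
    (hsurj : ∀ a, Function.Surjective (χ a))
    (hbicomm : ∀ (a b : E) (h : a ≤ b) (x : X a) (y : Y b),
      χ a x = q a b h y → ∃ z : X b, p a b h z = x ∧ χ b z = y) :
    IsOpenMap
      (fun x : {x : ∀ a, X a // ∀ (a b : E) (h : a ≤ b), p a b h (x b) = x a} =>
        (⟨fun a => χ a (x.1 a),
          fun a b h => by simp only []; rw [hlevel, x.2 a b h]⟩ :
          {y : ∀ a, Y a // ∀ (a b : E) (h : a ≤ b), q a b h (y b) = y a}))
    ∧ Function.Surjective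
      (fun x : {x : ∀ a, X a // ∀ (a b : E) (h : a ≤ b), p a b h (x b) = x a} =>
        (⟨fun a => χ a (x.1 a),
          fun a b h => by simp only []; rw [hlevel, x.2 a b h]⟩ :
          {y : ∀ a, Y a // ∀ (a b : E) (h : a ≤ b), q a b h (y b) = y a})) := by
  classical
  have key : ∀ (a : E) (xa : X a)
      (y : {y : ∀ a, Y a // ∀ (a b : E) (h : a ≤ b), q a b h (y b) = y a}),
      χ a xa = y.1 a →
      ∃ x : {x : ∀ a, X a // ∀ (a b : E) (h : a ≤ b), p a b h (x b) = x a},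
        x.1 a = xa ∧ ∀ c, χ c (x.1 c) = y.1 c := by
    intro a xa y hxy
    haveI : Nonempty E := ⟨a⟩
    have hXne : ∀ c, Nonempty (X c) := fun c => ⟨(hsurj c (y.1 c)).choose⟩
    set Z : E × E → Set (∀ c, X c) := fun bc =>
      {x | (∀ h : bc.1 ≤ bc.2, p bc.1 bc.2 h (x bc.2) = x bc.1) ∧ x a = xa ∧
        χ bc.1 (x bc.1) = y.1 bc.1} with hZ
    have hZc : ∀ bc, IsClosed (Z bc) := by
      intro bc
      have : Z bc = (⋂ h : bc.1 ≤ bc.2, {x : ∀ c, X c | p bc.1 bc.2 h (x bc.2) = x bc.1}) ∩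
          ({x : ∀ c, X c | x a = xa} ∩ {x : ∀ c, X c | χ bc.1 (x bc.1) = y.1 bc.1}) := by
        ext x
        simp [hZ, Set.mem_iInter, and_assoc]
      rw [this]
      refine IsClosed.inter (isClosed_iInter fun h => isClosed_eq
        (((p bc.1 bc.2 h).continuous).comp (continuous_apply bc.2)) (continuous_apply bc.1))
        (IsClosed.inter (isClosed_eq (continuous_apply a) continuous_const)
          (isClosed_eq (((χ bc.1).continuous).comp (continuous_apply bc.1)) continuous_const))
    have hne : (⋂ bc, Z bc).Nonempty := by
      by_contra hcon
      rw [Set.not_nonempty_iff_eq_empty] at hcon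
      obtain ⟨t, ht⟩ := CompactSpace.isCompact_univ.elim_finite_subfamily_closed Z hZc
        (by simpa using hcon)
      obtain ⟨d, hd⟩ := (insert a (t.image Prod.fst ∪ t.image Prod.snd)).exists_le
      have had : a ≤ d := hd a (Finset.mem_insert_self _ _)
      obtain ⟨z, hz1, hz2⟩ := hbicomm a d had xa (y.1 d) (by rw [hxy, y.2 a d had])
      set x : ∀ c, X c := fun c => if h : c ≤ d then p c d h z else (hXne c).some with hx
      have hmem : x ∈ Set.univ ∩ ⋂ bc ∈ t, Z bc := by
        refine ⟨trivial, Set.mem_iInter₂.mpr ?_⟩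
        intro bc hbc
        have hb : bc.1 ≤ d := hd bc.1 (Finset.mem_insert_of_mem
          (Finset.mem_union_left _ (Finset.mem_image_of_mem _ hbc)))
        have hc : bc.2 ≤ d := hd bc.2 (Finset.mem_insert_of_mem
          (Finset.mem_union_right _ (Finset.mem_image_of_mem _ hbc)))
        refine ⟨?_, ?_, ?_⟩
        · intro h
          simp only [hx, dif_pos hb, dif_pos hc]
          rw [hp_comp]
        · simp only [hx, dif_pos had]
          exact hz1
        · simp only [hx, dif_pos hb]
          rw [← hlevel bc.1 d hb z, hz2, y.2 bc.1 d hb]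
      rw [ht] at hmem
      exact hmem
    obtain ⟨w, hw⟩ := hne
    refine ⟨⟨w, fun b c h => (Set.mem_iInter.mp hw (b, c)).1 h⟩,
      (Set.mem_iInter.mp hw (a, a)).2.1, fun c => (Set.mem_iInter.mp hw (c, c)).2.2⟩
  constructor
  · intro U hU
    rcases isEmpty_or_nonempty E with hE | hE
    · have hsub : ∀ y z : {y : ∀ a, Y a // ∀ (a b : E) (h : a ≤ b), q a b h (y b) = y a},
          y = z := fun y z => Subtype.ext (funext fun c => isEmptyElim c)
      have hall : ∀ s : Set {y : ∀ a, Y a // ∀ (a b : E) (h : a ≤ b), q a b h (y b) = y a},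
          IsOpen s := by
        intro s
        rcases s.eq_empty_or_nonempty with h | ⟨y0, hy0⟩
        · simpa [h] using isOpen_empty
        · have : s = Set.univ := Set.eq_univ_of_forall fun y => (hsub y0 y) ▸ hy0
          simpa [this] using isOpen_univ
      exact hall _
    · obtain ⟨V, hV, rfl⟩ := isOpen_induced_iff.mp hU
      rw [isOpen_iff_forall_mem_open]
      rintro y ⟨x, hxU, rfl⟩
      obtain ⟨I, u, hIu, hVsub⟩ := isOpen_pi_iff.mp hV x.1 hxU
      obtain ⟨d, hd⟩ := I.exists_le
      set W : Set (X d) := ⋂ i : {i // i ∈ I}, p i.1 d (hd i.1 i.2) ⁻¹' u i.1 with hWdef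
      have hWopen : IsOpen W := isOpen_iInter_of_finite fun i =>
        ((hIu i.1 i.2).1).preimage (p i.1 d (hd i.1 i.2)).continuous
      have hxW : x.1 d ∈ W := Set.mem_iInter.mpr fun i => by
        rw [Set.mem_preimage, x.2 i.1 d (hd i.1 i.2)]
        exact (hIu i.1 i.2).2
      refine ⟨{y' : {y : ∀ a, Y a // ∀ (a b : E) (h : a ≤ b), q a b h (y b) = y a} |
          y'.1 d ∈ χ d '' W}, ?_, ?_, ?_⟩
      · rintro y' ⟨w, hwW, hwd⟩
        obtain ⟨x', hx'd, hx'⟩ := key d w y' hwd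
        refine ⟨x', ?_, ?_⟩
        · apply hVsub
          rw [Set.mem_pi]
          intro i hi
          have h2 := x'.2 i d (hd i hi)
          rw [← h2, hx'd]
          exact Set.mem_iInter.mp hwW ⟨i, hi⟩
        · exact Subtype.ext (funext fun c => hx' c)
      · exact IsOpen.preimage ((continuous_apply d).comp continuous_subtype_val)
          (hopen d W hWopen)
      · exact ⟨x.1 d, hxW, rfl⟩
  · intro y
    rcases isEmpty_or_nonempty E with hE | hE
    · refine ⟨⟨fun a => isEmptyElim a, fun a => isEmptyElim a⟩, ?_⟩
      exact Subtype.ext (funext fun c => isEmptyElim c)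
    · obtain ⟨a⟩ := hE
      obtain ⟨xa, hxa⟩ := hsurj a (y.1 a)
      have hxa' : χ a xa = y.1 a := hxa
      obtain ⟨x, _, hx⟩ := key a xa y hxa'
      exact ⟨x, Subtype.ext (funext fun c => hx c)⟩
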